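/- Let w be the positive radial solution of the basic cell problem (radially symmetric about the origin), and suppose the support of (w−1)₊ is the closed ball B̄_R(0) for some R > 0. Set m_* = ∫_{ℝ³} (w−1)₊^p dx. Then m_* = 4πR and w(x) = m_*/(4π|x|) for every x ∈ ℝ³ with |x| ≥ R. -/

import Mathlib

/-!
Writing `w x = φ ‖x‖`, the equation reads `(r² φ')' = -r² (φ - 1)₊^p`. Integrating from `0`, the
flux `r² φ'(r)` equals `-∫₀^r t² (φ - 1)₊^p`, which for `r ≥ R` is the constant `-m_*/(4π)`
because `φ ≤ 1` outside the ball. Since `w → 0` at infinity this forces `φ r = m_*/(4π r)` on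
`[R, ∞)`, and `φ R = 1` (the sphere of radius `R` is the boundary of `supp (w - 1)₊`) gives
`m_* = 4πR`.
-/

open MeasureTheory Filter

/-- The Laplacian on `ℝ³` (Euclidean space), as the sum of second partial derivatives. -/
noncomputable def lap (f : EuclideanSpace ℝ (Fin 3) → ℝ) (x : EuclideanSpace ℝ (Fin 3)) : ℝ :=
  ∑ i : Fin 3,
    iteratedFDeriv ℝ 2 f x ![EuclideanSpace.single i 1, EuclideanSpace.single i 1]

/-- A solution of the basic cell problem: `w ∈ C²(ℝ³)`, `−Δw = (w−1)₊^p` in `ℝ³`,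
and `w(x) → 0` as `|x| → ∞`. -/
def IsCellSolution (p : ℝ) (w : EuclideanSpace ℝ (Fin 3) → ℝ) : Prop :=
  ContDiff ℝ 2 w ∧ (∀ x, - lap w x = (max (w x - 1) 0) ^ p) ∧
    Tendsto w (cocompact (EuclideanSpace ℝ (Fin 3))) (nhds 0)

open Set Topology Metric Real

lemma le_of_mem_tsupport_max_sub {X : Type*} [TopologicalSpace X] {f : X → ℝ}
    (hf : Continuous f) {a : ℝ} {x : X} (hx : x ∈ tsupport fun y => max (f y - a) 0) :
    a ≤ f x := by
  refine closure_minimal (fun y hy => ?_) (isClosed_le continuous_const hf) hx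
  show a ≤ f y
  by_contra! h
  exact hy (max_eq_right (by linarith))

lemma le_of_tsupport_max_sub_subset_closedBall {E : Type*} [NormedAddCommGroup E]
    [NormedSpace ℝ E] [Nontrivial E] {f : E → ℝ} (hf : Continuous f) {a R : ℝ}
    (hsupp : tsupport (fun y => max (f y - a) 0) ⊆ closedBall 0 R) {x : E} (hx : R ≤ ‖x‖) :
    f x ≤ a := by
  have houtside : (closedBall (0 : E) R)ᶜ ⊆ {y | f y ≤ a} := fun y hy => by
    simpa using image_eq_zero_of_notMem_tsupport fun h => hy (hsupp h)
  refine closure_minimal houtside (isClosed_le hf continuous_const) ?_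
  rw [closure_compl, interior_closedBall']
  simpa using hx

lemma tendsto_smul_atTop_cocompact {E : Type*} [NormedAddCommGroup E] [NormedSpace ℝ E]
    [ProperSpace E] {u : E} (hu : u ≠ 0) :
    Tendsto (fun r : ℝ => r • u) atTop (cocompact E) := by
  rw [← Metric.cobounded_eq_cocompact, ← tendsto_norm_atTop_iff_cobounded]
  simp_rw [norm_smul]
  exact tendsto_norm_atTop_atTop.atTop_mul_const (norm_pos_iff.mpr hu)

lemma intervalIntegral_eq_setIntegral_Ioi_of_eq_zero {f : ℝ → ℝ} {a b : ℝ} (hab : a ≤ b)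
    (hf : ∀ t, b < t → f t = 0) : ∫ t in a..b, f t = ∫ t in Ioi a, f t := by
  rw [intervalIntegral.integral_of_le hab, setIntegral_eq_of_subset_of_forall_sdiff_eq_zero
    measurableSet_Ioi Ioc_subset_Ioi_self]
  rintro t ⟨ht, hnot⟩
  exact hf t (not_le.mp fun htb => hnot ⟨ht, htb⟩)

lemma sq_mul_deriv_eq_neg_integral {φ g : ℝ → ℝ} (hφ : ContDiff ℝ 2 φ) (hg : Continuous g)
    (hode : ∀ r, 0 < r → deriv (deriv φ) r + 2 * (deriv φ r / r) = -g r) {b : ℝ} (hb : 0 ≤ b) :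
    b ^ 2 * deriv φ b = -∫ t in 0..b, t ^ 2 * g t := by
  have hφ' : ContDiff ℝ 1 (deriv φ) := hφ.iterate_deriv' 1 1
  have hflux : ∀ r ∈ Ioo 0 b, HasDerivAt (fun t => t ^ 2 * deriv φ t) (-(r ^ 2 * g r)) r := by
    intro r hr
    refine ((hasDerivAt_pow 2 r).mul (hφ'.differentiable one_ne_zero r).hasDerivAt).congr_deriv ?_
    have := hr.1.ne'
    rw [← neg_eq_iff_eq_neg.mpr (hode r hr.1)]
    field_simp
    ring
  have := intervalIntegral.integral_eq_sub_of_hasDerivAt_of_le hb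
    ((continuous_pow 2).mul hφ'.continuous).continuousOn hflux
    (((continuous_pow 2).mul hg).neg.intervalIntegrable 0 b)
  rw [intervalIntegral.integral_neg] at this
  simp only [Pi.mul_apply, ne_eq, OfNat.ofNat_ne_zero, not_false_eq_true, zero_pow, zero_mul,
    sub_zero] at this
  linarith

lemma eqOn_div_of_deriv_eq {φ : ℝ → ℝ} {c R : ℝ} (hR : 0 < R) (hφ : Differentiable ℝ φ)
    (hlim : Tendsto φ atTop (𝓝 0)) (hderiv : ∀ r, R < r → deriv φ r = -c / r ^ 2) :
    EqOn φ (fun r => c / r) (Ici R) := by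
  have hinv : ∀ r, 0 < r → HasDerivAt (fun s => c / s) (-c / r ^ 2) r := fun r hr => by
    simpa [div_eq_mul_inv, neg_div, mul_neg] using (hasDerivAt_inv hr.ne').const_mul c
  obtain ⟨a, ha⟩ := isOpen_Ioi.exists_eq_add_of_deriv_eq isPreconnected_Ioi
    hφ.differentiableOn (fun r hr => (hinv r (hR.trans hr)).differentiableAt.differentiableWithinAt)
    (fun r hr => by rw [hderiv r hr, (hinv r (hR.trans hr)).deriv])
  have ha0 : a = 0 := by
    have : Tendsto (fun r => c / r + a) atTop (𝓝 (0 + a)) :=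
      (tendsto_const_nhds.div_atTop tendsto_id).add_const a
    refine (zero_add a).symm.trans (tendsto_nhds_unique this (hlim.congr' ?_))
    filter_upwards [eventually_gt_atTop R] with r hr using ha hr
  subst ha0
  refine EqOn.of_subset_closure (fun r hr => by simpa using ha hr) hφ.continuous.continuousOn
    (fun r hr => (hinv r (hR.trans_le hr)).continuousAt.continuousWithinAt) Ioi_subset_Ici_self
    (by rw [closure_Ioi])

lemma deriv_deriv_comp_sqrt_sq_add_sq {φ : ℝ → ℝ} (hφ : ContDiff ℝ 2 φ) {r : ℝ} (hr : 0 < r) :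
    deriv (deriv fun t => φ √(r ^ 2 + t ^ 2)) 0 = deriv φ r / r := by
  set s : ℝ → ℝ := fun t => √(r ^ 2 + t ^ 2)
  have hs_pos : ∀ t, 0 < s t := fun t => Real.sqrt_pos.mpr (by positivity)
  have hs : ∀ t, HasDerivAt s (t / s t) t := fun t => by
    convert ((hasDerivAt_pow 2 t).const_add (r ^ 2)).sqrt (by positivity) using 1
    simp [s]
    field_simp
  have hφ' : ContDiff ℝ 1 (deriv φ) := hφ.iterate_deriv' 1 1
  have hfirst : deriv (fun t => φ (s t)) = fun t => deriv φ (s t) * (t / s t) :=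
    funext fun t => ((hφ.differentiable two_ne_zero (s t)).hasDerivAt.comp t (hs t)).deriv
  have hs0 : s 0 = r := by simp [s, Real.sqrt_sq hr.le]
  have hsecond : HasDerivAt (fun t => deriv φ (s t) * (t / s t)) (deriv φ r / r) 0 :=
    (((hφ'.differentiable one_ne_zero (s 0)).hasDerivAt.comp 0 (hs 0)).mul
      ((hasDerivAt_id 0).div (hs 0) (hs_pos 0).ne')).congr_deriv (by simp [hs0]; field_simp)
  rw [hfirst, hsecond.deriv]

lemma iteratedFDeriv_two_apply_eq_deriv_deriv {E : Type*} [NormedAddCommGroup E]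
    [NormedSpace ℝ E] {w : E → ℝ} (hw : ContDiff ℝ 2 w) (x v : E) :
    iteratedFDeriv ℝ 2 w x ![v, v] = deriv (deriv fun t : ℝ => w (x + t • v)) 0 := by
  have hw' : Differentiable ℝ (fderiv ℝ w) :=
    (hw.fderiv_right (m := 1) le_rfl).differentiable one_ne_zero
  have hline : ∀ t : ℝ, HasDerivAt (fun s : ℝ => x + s • v) v t := fun t => by
    simpa using ((hasDerivAt_id t).smul_const v).const_add x
  have hfirst : deriv (fun t : ℝ => w (x + t • v)) = fun t => fderiv ℝ w (x + t • v) v :=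
    funext fun t =>
      ((hw.differentiable two_ne_zero _).hasFDerivAt.comp_hasDerivAt t (hline t)).deriv
  have hsecond := (((hw' _).hasFDerivAt.comp_hasDerivAt 0 (hline 0)).clm_apply
    (hasDerivAt_const 0 v)).deriv
  simp only [zero_smul, add_zero, ContinuousLinearMap.map_zero] at hsecond
  rw [iteratedFDeriv_two_apply, hfirst]
  simpa using hsecond.symm

noncomputable def radialProfile (w : EuclideanSpace ℝ (Fin 3) → ℝ) (r : ℝ) : ℝ :=
  w (r • EuclideanSpace.single 0 1)

section radialProfile

variable {w : EuclideanSpace ℝ (Fin 3) → ℝ}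

lemma norm_smul_single_zero (r : ℝ) :
    ‖r • EuclideanSpace.single (0 : Fin 3) (1 : ℝ)‖ = |r| := by
  simp [norm_smul]

lemma norm_smul_single_zero_add_smul_single {i : Fin 3} (hi : i ≠ 0) (r t : ℝ) :
    ‖r • EuclideanSpace.single 0 1 + t • EuclideanSpace.single i (1 : ℝ)‖ = √(r ^ 2 + t ^ 2) := by
  rw [EuclideanSpace.norm_eq]
  fin_cases i <;> simp_all [Fin.sum_univ_three]

lemma eq_radialProfile_norm (hrad : ∀ x y : EuclideanSpace ℝ (Fin 3), ‖x‖ = ‖y‖ → w x = w y)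
    (x : EuclideanSpace ℝ (Fin 3)) : w x = radialProfile w ‖x‖ :=
  hrad _ _ (by rw [norm_smul_single_zero, abs_norm])

lemma ContDiff.radialProfile {n : WithTop ℕ∞} (hw : ContDiff ℝ n w) :
    ContDiff ℝ n (radialProfile w) :=
  hw.comp (contDiff_id.smul contDiff_const)

lemma lap_smul_single_zero_of_radial (hw : ContDiff ℝ 2 w)
    (hrad : ∀ x y : EuclideanSpace ℝ (Fin 3), ‖x‖ = ‖y‖ → w x = w y) {r : ℝ} (hr : 0 < r) :
    lap w (r • EuclideanSpace.single 0 1)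
      = deriv (deriv (radialProfile w)) r + 2 * (deriv (radialProfile w) r / r) := by
  have hradial : ∀ i : Fin 3, i ≠ 0 → deriv (deriv fun t : ℝ =>
      w (r • EuclideanSpace.single 0 1 + t • EuclideanSpace.single i 1)) 0
        = deriv (radialProfile w) r / r := fun i hi => by
    simp_rw [eq_radialProfile_norm hrad, norm_smul_single_zero_add_smul_single hi]
    exact deriv_deriv_comp_sqrt_sq_add_sq hw.radialProfile hr
  have haxial : deriv (deriv fun t : ℝ =>
      w (r • EuclideanSpace.single 0 1 + t • EuclideanSpace.single 0 1)) 0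
        = deriv (deriv (radialProfile w)) r := by
    simp_rw [← add_smul]
    show deriv (deriv fun t => radialProfile w (r + t)) 0 = _
    rw [funext fun t => deriv_comp_const_add (radialProfile w) r t, deriv_comp_const_add, add_zero]
  simp only [lap, Fin.sum_univ_three, iteratedFDeriv_two_apply_eq_deriv_deriv hw, haxial,
    hradial 1 one_ne_zero, hradial 2 (by decide)]
  ring

lemma radialProfile_le_one (hw : Continuous w) {R : ℝ}
    (hsupp : tsupport (fun x => max (w x - 1) 0) ⊆ closedBall 0 R) {r : ℝ} (hr : R ≤ r) :
    radialProfile w r ≤ 1 :=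
  le_of_tsupport_max_sub_subset_closedBall hw hsupp
    (by rw [norm_smul_single_zero]; exact hr.trans (le_abs_self r))

lemma radialProfile_eq_one (hw : Continuous w) {R : ℝ} (hR : 0 ≤ R)
    (hsupp : tsupport (fun x => max (w x - 1) 0) = closedBall 0 R) :
    radialProfile w R = 1 := by
  have hnorm : ‖R • EuclideanSpace.single (0 : Fin 3) (1 : ℝ)‖ = R := by
    rw [norm_smul_single_zero, abs_of_nonneg hR]
  refine le_antisymm (radialProfile_le_one hw hsupp.subset le_rfl)
    (le_of_mem_tsupport_max_sub hw ?_)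
  rw [hsupp, mem_closedBall_zero_iff, hnorm]

lemma IsCellSolution.radialProfile_ode {p : ℝ} (hw : IsCellSolution p w)
    (hrad : ∀ x y : EuclideanSpace ℝ (Fin 3), ‖x‖ = ‖y‖ → w x = w y) {r : ℝ} (hr : 0 < r) :
    deriv (deriv (radialProfile w)) r + 2 * (deriv (radialProfile w) r / r)
      = -max (radialProfile w r - 1) 0 ^ p := by
  have := hw.2.1 (r • EuclideanSpace.single 0 1)
  rw [lap_smul_single_zero_of_radial hw.1 hrad hr] at this
  exact neg_eq_iff_eq_neg.mp this

end radialProfile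

lemma integral_fun_norm_euclideanSpace_fin_three (f : ℝ → ℝ) :
    ∫ x : EuclideanSpace ℝ (Fin 3), f ‖x‖ = 4 * π * ∫ r in Ioi 0, r ^ 2 * f r := by
  rw [integral_fun_norm_addHaar, finrank_euclideanSpace_fin, measureReal_def,
    EuclideanSpace.volume_ball_fin_three]
  simp only [ENNReal.ofReal_one, one_pow, one_mul, smul_eq_mul]
  rw [ENNReal.toReal_ofReal (by positivity)]
  push_cast
  ring

theorem stmt11_general (p : ℝ) (hp1 : 3 / 2 < p)
    (w : EuclideanSpace ℝ (Fin 3) → ℝ) (hw : IsCellSolution p w)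
    (hrad : ∀ x y : EuclideanSpace ℝ (Fin 3), ‖x‖ = ‖y‖ → w x = w y)
    (R : ℝ) (hR : 0 < R)
    (hsupp : tsupport (fun x => max (w x - 1) 0)
      = Metric.closedBall (0 : EuclideanSpace ℝ (Fin 3)) R)
    (mstar : ℝ)
    (hmstar : mstar = ∫ x : EuclideanSpace ℝ (Fin 3), (max (w x - 1) 0) ^ p) :
    mstar = 4 * Real.pi * R ∧
    ∀ x : EuclideanSpace ℝ (Fin 3), R ≤ ‖x‖ → w x = mstar / (4 * Real.pi * ‖x‖) := by
  set g : ℝ → ℝ := fun r => max (radialProfile w r - 1) 0 ^ p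
  have hg : Continuous g := ((hw.1.radialProfile.continuous.sub continuous_const).max
    continuous_const).rpow_const fun _ => Or.inr (by linarith)
  have hg_zero : ∀ r, R ≤ r → g r = 0 := fun r hr => by
    have := radialProfile_le_one hw.1.continuous hsupp.subset hr
    change max (radialProfile w r - 1) 0 ^ p = 0
    rw [max_eq_right (sub_nonpos.mpr this), Real.zero_rpow (by linarith)]
  set c := ∫ t in Ioi 0, t ^ 2 * g t
  have hflux : ∀ r, R < r → deriv (radialProfile w) r = -c / r ^ 2 := fun r hr => by
    have hr0 := hR.trans hr
    rw [eq_div_iff (by positivity), mul_comm,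
      sq_mul_deriv_eq_neg_integral hw.1.radialProfile hg (fun _ => hw.radialProfile_ode hrad)
        hr0.le,
      intervalIntegral_eq_setIntegral_Ioi_of_eq_zero hr0.le
        fun t ht => by rw [hg_zero t (hr.le.trans ht.le), mul_zero]]
  have htail : EqOn (radialProfile w) (fun r => c / r) (Ici R) :=
    eqOn_div_of_deriv_eq hR (hw.1.radialProfile.differentiable two_ne_zero)
      (hw.2.2.comp (tendsto_smul_atTop_cocompact (by simp))) hflux
  have hcR : c = R := by
    have := htail self_mem_Ici
    rw [radialProfile_eq_one hw.1.continuous hR.le hsupp, eq_div_iff hR.ne'] at this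
    linarith
  have hm : mstar = 4 * π * c := by
    simp_rw [hmstar, eq_radialProfile_norm hrad]
    exact integral_fun_norm_euclideanSpace_fin_three g
  refine ⟨hm.trans (by rw [hcR]), fun x hx => ?_⟩
  rw [eq_radialProfile_norm hrad, htail hx, hm, hcR]
  field_simp

/-- let `w` be the positive radial (about the origin) solution of the basic
cell problem, whose set `supp (w−1)₊` has closure equal to the closed ball `B̄_R(0)`,
`R > 0`, and let `m_* = ∫ (w−1)₊^p`. Then `m_* = 4πR` and `w(x) = m_*/(4π|x|)` for
`|x| ≥ R`. -/
theorem stmt11 (p : ℝ) (hp1 : 3 / 2 < p) (hp2 : p < 5)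
    (w : EuclideanSpace ℝ (Fin 3) → ℝ) (hw : IsCellSolution p w) (hpos : ∀ x, 0 < w x)
    (hrad : ∀ x y : EuclideanSpace ℝ (Fin 3), ‖x‖ = ‖y‖ → w x = w y)
    (R : ℝ) (hR : 0 < R)
    (hsupp : tsupport (fun x => max (w x - 1) 0)
      = Metric.closedBall (0 : EuclideanSpace ℝ (Fin 3)) R)
    (mstar : ℝ)
    (hmstar : mstar = ∫ x : EuclideanSpace ℝ (Fin 3), (max (w x - 1) 0) ^ p) :
    mstar = 4 * Real.pi * R ∧
    ∀ x : EuclideanSpace ℝ (Fin 3), R ≤ ‖x‖ → w x = mstar / (4 * Real.pi * ‖x‖) :=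
  stmt11_general p hp1 w hw hrad R hR hsupp mstar hmstar
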